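/- Let t be a positive multiple of m, let k ≥ 0 and s ≥ 1, let a_0, …, a_k ∈ F_2 and b_1, …, b_s ∈ F_2, and set f = Σ_{i=0}^{k} a_i θ_{m,i} and g = θ_{m,0} + Σ_{j=1}^{s} b_j θ_{m,j}. Then (S^t ∘ f) ⊙ ⊙_{v=1}^{m−1} (S^{t−v} ∘ g + 1) = S^{t−m} ∘ (Σ_{i=0}^{k} a_i θ_{m,i+1}). -/

import Mathlib

/-!
Two facts about the maps `θ` do all the work. First,
`θ_{k+1}(x)_p = θ_k(x)_{p+m} · ∏_{0<j<m} (x_{p+j} + 1)`: the gap positions of `θ_{k+1}` are those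
of `θ_k` shifted by `m`, plus the first block `0 < j < m`. Second, `θ_i(x)_{p+v} · θ_j(x)_p = 0`
for `0 < v < m` and `j ≥ 1`: one factor contains `x_q` and the other `x_q + 1` for the same `q`
(`q = p + v + mi` if `i < j`, `q = p + mj` otherwise), and `a(a+1) = 0` in `F_2`. By the second
fact every `θ_j` with `j ≥ 1` in `g` can be dropped from the product against `S^t ∘ f`; what
remains is the first fact.
-/
/-- Index `i + j` computed modulo `n`, for `i : Fin n` and `j : ℕ`. -/
def idx {n : ℕ} (i : Fin n) (j : ℕ) : Fin n :=
  ⟨(i.val + j) % n, Nat.mod_lt _ i.pos⟩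

/-- The map `θ_{m,k} : F_2^n → F_2^n`; `θ_{m,0}` is the identity map, and for `k ≥ 1`,
`(θ_{m,k}(x))_i = x_{i+mk} · ∏_{1 ≤ j ≤ mk−1, m ∤ j} (x_{i+j} + 1)` (indices mod `n`). -/
def theta (n m k : ℕ) : (Fin n → ZMod 2) → Fin n → ZMod 2 :=
  if k = 0 then id
  else fun x i =>
    x (idx i (m * k)) *
      ∏ j ∈ (Finset.Ico 1 (m * k)).filter (fun j => ¬ m ∣ j), (x (idx i j) + 1)

open Finset

theorem ZMod.mul_add_one_self (a : ZMod 2) : a * (a + 1) = 0 := by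
  revert a; decide

theorem ZMod.mul_eq_zero_of_dvd_of_add_one_dvd {a u v : ZMod 2} (hu : a ∣ u) (hv : a + 1 ∣ v) :
    u * v = 0 := by
  obtain ⟨c, rfl⟩ := hu
  obtain ⟨d, rfl⟩ := hv
  linear_combination c * d * ZMod.mul_add_one_self a

theorem Finset.mul_prod_add_of_mul_eq_zero {ι R : Type*} [CommRing R]
    (A : R) (s : Finset ι) (f g : ι → R) (h : ∀ v ∈ s, A * g v = 0) :
    A * ∏ v ∈ s, (f v + g v) = A * ∏ v ∈ s, f v := by
  classical
  induction s using Finset.induction_on with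
  | empty => rfl
  | insert c s hc ih =>
    rw [prod_insert hc, prod_insert hc]
    have hs := ih fun v hv => h v (mem_insert_of_mem hv)
    linear_combination f c * hs + (∏ v ∈ s, (f v + g v)) * h c (mem_insert_self c s)

section idx

variable {n : ℕ}

theorem idx_zero (i : Fin n) : idx i 0 = i :=
  Fin.ext (by simp [idx, Nat.mod_eq_of_lt i.isLt])

theorem idx_idx (i : Fin n) (a b : ℕ) : idx (idx i a) b = idx i (a + b) := by
  simp [idx, Nat.add_assoc]

end idx

section theta

variable {n m : ℕ} (x : Fin n → ZMod 2)

theorem theta_zero : theta n m 0 = id := if_pos rfl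

theorem theta_apply (k : ℕ) (p : Fin n) :
    theta n m k x p =
      x (idx p (m * k)) * ∏ j ∈ range (m * k), if m ∣ j then 1 else x (idx p j) + 1 := by
  rcases eq_or_ne k 0 with rfl | hk
  · simp [theta_zero, idx_zero]
  have hgaps : (Ico 1 (m * k)).filter (fun j => ¬ m ∣ j) =
      (range (m * k)).filter (fun j => ¬ m ∣ j) := by
    ext j
    rcases j.eq_zero_or_pos with rfl | hj
    · simp
    · simp [Nat.one_le_iff_ne_zero, hj.ne']
  rw [theta, if_neg hk, hgaps, prod_filter]
  simp only [ite_not]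

theorem dvd_theta (k : ℕ) (p : Fin n) : x (idx p (m * k)) ∣ theta n m k x p := by
  rw [theta_apply]
  exact dvd_mul_right _ _

theorem add_one_dvd_theta {k w : ℕ} (hw : w < m * k) (hmw : ¬ m ∣ w) (p : Fin n) :
    x (idx p w) + 1 ∣ theta n m k x p := by
  rw [theta_apply]
  refine Dvd.dvd.mul_left ?_ _
  simpa [hmw] using dvd_prod_of_mem (fun j => if m ∣ j then 1 else x (idx p j) + 1) (mem_range.2 hw)

theorem theta_mul_theta_eq_zero {v : ℕ} (hv : 0 < v) (hvm : v < m) (i : ℕ) {j : ℕ} (hj : 0 < j)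
    (p : Fin n) : theta n m i x (idx p v) * theta n m j x p = 0 := by
  have hmv : ¬ m ∣ v := fun h => hv.ne' (Nat.eq_zero_of_dvd_of_lt h hvm)
  rcases lt_or_ge i j with hij | hji
  · refine ZMod.mul_eq_zero_of_dvd_of_add_one_dvd (dvd_theta x i _) ?_
    rw [idx_idx]
    refine add_one_dvd_theta x ?_ (by simpa [Nat.dvd_add_left] using hmv) p
    nlinarith
  · rw [mul_comm]
    refine ZMod.mul_eq_zero_of_dvd_of_add_one_dvd (dvd_theta x j p) ?_
    have hmj : m ≤ m * j := Nat.le_mul_of_pos_right m hj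
    have hw : ¬ m ∣ m * j - v := fun h => hmv (by
      simpa [Nat.sub_sub_self (hvm.le.trans hmj)] using Nat.dvd_sub (dvd_mul_right m j) h)
    have hlt : m * j - v < m * i := by
      have := Nat.mul_le_mul_left m hji
      omega
    convert add_one_dvd_theta x hlt hw (idx p v) using 3
    rw [idx_idx]
    congr 1
    omega

theorem theta_succ_apply (k : ℕ) (p : Fin n) :
    theta n m (k + 1) x p = theta n m k x (idx p m) * ∏ j ∈ Ioo 0 m, (x (idx p j) + 1) := by
  have hwindow : ∏ j ∈ range m, (if m ∣ j then 1 else x (idx p j) + 1) =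
      ∏ j ∈ Ioo 0 m, (x (idx p j) + 1) := by
    rw [prod_ite, prod_const_one, one_mul]
    congr 1
    ext j
    simp only [mem_filter, mem_range, mem_Ioo]
    exact ⟨fun ⟨hj, hmj⟩ => ⟨Nat.pos_of_ne_zero fun h => hmj (h ▸ dvd_zero m), hj⟩,
      fun ⟨hj, hjm⟩ => ⟨hjm, fun h => hj.ne' (Nat.eq_zero_of_dvd_of_lt h hjm)⟩⟩
  rw [theta_apply, theta_apply, mul_add_one, add_comm, prod_range_add, ← hwindow]
  simp only [Nat.dvd_add_right (dvd_refl m), idx_idx]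
  ring

theorem theta_succ_apply_sub {t : ℕ} (hmt : m ≤ t) (k : ℕ) (i : Fin n) :
    theta n m (k + 1) x (idx i (t - m)) =
      theta n m k x (idx i t) * ∏ v ∈ Icc 1 (m - 1), (x (idx i (t - v)) + 1) := by
  rw [theta_succ_apply, idx_idx, Nat.sub_add_cancel hmt]
  congr 1
  refine prod_nbij' (m - ·) (m - ·) ?_ ?_ ?_ ?_ ?_ <;> intro j hj <;>
    simp only [mem_Ioo, mem_Icc] at hj
  · simp only [mem_Icc]; omega
  · simp only [mem_Ioo]; omega
  · omega
  · omega
  · rw [idx_idx]; congr 3; omega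

end theta

theorem stmt4_general (n m : ℕ)
    (t : ℕ) (ht : 0 < t) (htm : m ∣ t) (k s : ℕ)
    (a b : ℕ → ZMod 2) :
    (fun (x : Fin n → ZMod 2) (i : Fin n) =>
        (∑ i' ∈ Finset.range (k + 1), a i' • theta n m i') x (idx i t) *
          ∏ v ∈ Finset.Icc 1 (m - 1),
            ((theta n m 0 + ∑ j ∈ Finset.Icc 1 s, b j • theta n m j) x (idx i (t - v)) + 1)) =
      fun (x : Fin n → ZMod 2) (i : Fin n) =>
        (∑ i' ∈ Finset.range (k + 1), a i' • theta n m (i' + 1)) x (idx i (t - m)) := by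
  have hmt : m ≤ t := Nat.le_of_dvd ht htm
  funext x i
  simp only [Finset.sum_apply, Pi.add_apply, Pi.smul_apply, smul_eq_mul, theta_zero, id_eq]
  set A := ∑ i' ∈ range (k + 1), a i' * theta n m i' x (idx i t)
  have hA : ∀ v ∈ Icc 1 (m - 1), A * ∑ j ∈ Icc 1 s, b j * theta n m j x (idx i (t - v)) = 0 := by
    intro v hv
    rw [mem_Icc] at hv
    have hvm : v < m := by omega
    have hshift : idx i t = idx (idx i (t - v)) v := by
      rw [idx_idx]
      congr 1
      omega
    rw [sum_mul_sum]
    refine sum_eq_zero fun i' _ => sum_eq_zero fun j hj => ?_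
    rw [hshift]
    linear_combination (a i' * b j) *
      theta_mul_theta_eq_zero x hv.1 hvm i' (mem_Icc.1 hj).1 (idx i (t - v))
  rw [prod_congr rfl fun v _ => add_right_comm _ _ _, mul_prod_add_of_mul_eq_zero A _ _ _ hA,
    sum_mul]
  refine sum_congr rfl fun i' _ => ?_
  rw [mul_assoc, theta_succ_apply_sub x hmt]

/-- Lemma on `(S^t ∘ f) ⊙ ⊙_{v=1}^{m-1} (S^{t-v} ∘ g + 1)`, written
coordinatewise: the `i`-th coordinate of `S^t ∘ f` is `f(x)_{i+t}` etc. -/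
theorem stmt4 (n m : ℕ) (hn : 1 ≤ n) (hm : 2 ≤ m) (hmn : ¬ m ∣ n)
    (t : ℕ) (ht : 0 < t) (htm : m ∣ t) (k s : ℕ) (hs : 1 ≤ s)
    (a b : ℕ → ZMod 2) :
    (fun (x : Fin n → ZMod 2) (i : Fin n) =>
        (∑ i' ∈ Finset.range (k + 1), a i' • theta n m i') x (idx i t) *
          ∏ v ∈ Finset.Icc 1 (m - 1),
            ((theta n m 0 + ∑ j ∈ Finset.Icc 1 s, b j • theta n m j) x (idx i (t - v)) + 1)) =
      fun (x : Fin n → ZMod 2) (i : Fin n) =>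
        (∑ i' ∈ Finset.range (k + 1), a i' • theta n m (i' + 1)) x (idx i (t - m)) :=
  stmt4_general n m t ht htm k s a b
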